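/- Let G = (V,E) be a finite connected undirected unweighted graph, let r ∈ V, and let T be a spanning tree of G such that for every vertex z the unique r–z path in T has length δ(r,z) (a shortest-path tree rooted at r). Let x ≠ r be a vertex and let w be a vertex adjacent to x in T whose tree path from r passes through x (a child of x). Let D = {z ∈ V : the tree path from r to z in T passes through w}, and suppose r and w are connected in G−x. Then there exists a path R from r to w in G−x of length δ(r,w,x) and a vertex c on R such that: (i) every vertex of R strictly before c lies outside D ∪ {x} and every vertex of R from c onward lies in D; and (ii) the prefix of R from r up to the last vertex before c is a shortest path between its endpoints in the subgraph of G induced on V \ (D ∪ {x}). -/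

import Mathlib

open scoped ENNReal Classical

/-- The graph `G` with vertex `x` "failed": edges incident to `x` are removed,
so that walks in `G.avoid x` are exactly walks of `G` avoiding `x`
(for endpoints different from `x`). -/
def SimpleGraph.avoid {V : Type*} (G : SimpleGraph V) (x : V) : SimpleGraph V where
  Adj a b := G.Adj a b ∧ a ≠ x ∧ b ≠ x
  symm := ⟨fun _ _ h => ⟨h.1.symm, h.2.2, h.2.1⟩⟩
  loopless := ⟨fun a h => G.loopless.irrefl a h.1⟩

/-- `δ(a,b,x)` : the distance (in `ℕ∞`) between `a` and `b` in `G − x`,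
with the convention that it is `∞` if `a = x` or `b = x`. -/
noncomputable def davoid {V : Type*} (G : SimpleGraph V) (a b x : V) : ℕ∞ :=
  if a = x ∨ b = x then ⊤ else (G.avoid x).edist a b

/-- `δ(v,B)` : distance from `v` to the set `B`. -/
noncomputable def dset {V : Type*} (G : SimpleGraph V) (v : V) (B : Set V) : ℕ∞ :=
  ⨅ w ∈ B, G.edist v w

/-- `δ(v,B,x)` : distance from `v` to the set `B` in `G − x`. -/
noncomputable def dsetAvoid {V : Type*} (G : SimpleGraph V) (v : V) (B : Set V) (x : V) : ℕ∞ :=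
  ⨅ w ∈ B, davoid G v w x

/-- `Ball(v,A,B) = {w ∈ A : δ(v,w) < δ(v,B)}`. -/
def ball {V : Type*} (G : SimpleGraph V) (v : V) (A B : Set V) : Set V :=
  {w ∈ A | G.edist v w < dset G v B}

/-- `Ball^x(v,A,B) = {w ∈ A : δ(v,w,x) < δ(v,B,x)}`. -/
def ballAvoid {V : Type*} (G : SimpleGraph V) (v : V) (A B : Set V) (x : V) : Set V :=
  {w ∈ A | davoid G v w x < dsetAvoid G v B x}

/-- `Ball^x(v,A,B,ε) = {w ∈ A : (1+ε)·δ(v,w,x) < δ(v,B,x)}`. -/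
def ballTrunc {V : Type*} (G : SimpleGraph V) (v : V) (A B : Set V) (x : V) (ε : ℝ) : Set V :=
  {w ∈ A | ENNReal.ofReal (1 + ε) * (davoid G v w x : ℝ≥0∞) < (dsetAvoid G v B x : ℝ≥0∞)}

/-- `C^x(w,A,B,ε) = {v ∈ V : (1+ε)·δ(v,w,x) < δ(v,B,x)}`. -/
def clusterTrunc {V : Type*} (G : SimpleGraph V) (w : V) (B : Set V) (x : V) (ε : ℝ) : Set V :=
  {v | ENNReal.ofReal (1 + ε) * (davoid G v w x : ℝ≥0∞) < (dsetAvoid G v B x : ℝ≥0∞)}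

/-- The graph `G` with all the vertices of the set `S` "failed". -/
def SimpleGraph.avoidSet {V : Type*} (G : SimpleGraph V) (S : Set V) : SimpleGraph V where
  Adj a b := G.Adj a b ∧ a ∉ S ∧ b ∉ S
  symm := ⟨fun _ _ h => ⟨h.1.symm, h.2.2, h.2.1⟩⟩
  loopless := ⟨fun a h => G.loopless.irrefl a h.1⟩

/-!
Take a shortest `r`–`w` path `R₀` in `G − x` and let `b → c` be its first edge entering the
subtree `D` of `T` hanging at `w`. Since `T` is a shortest-path tree, the tree path from `w`
down to `c` has length `δ(r,c) - δ(r,w) ≤ δ(w,c)`, which is at most the length of the rest of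
`R₀`. Replacing that rest by the reversed tree path (which stays in `D`, hence avoids `x`) gives
a path `R` that is still shortest in `G − x`, enters `D` once and stays there. The prefix of `R`
up to `b` is then shortest in `G − (D ∪ {x})`: a shorter detour there would shorten `R` itself.
-/

open SimpleGraph

namespace SimpleGraph

variable {V : Type*}

theorem avoid_le (G : SimpleGraph V) (x : V) : G.avoid x ≤ G := fun _ _ h => h.1

theorem avoidSet_le_avoid {G : SimpleGraph V} {S : Set V} {x : V} (hx : x ∈ S) :
    G.avoidSet S ≤ G.avoid x :=
  fun _ _ h => ⟨h.1, fun ha => h.2.1 (ha ▸ hx), fun hb => h.2.2 (hb ▸ hx)⟩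

theorem davoid_of_ne {G : SimpleGraph V} {a b x : V} (ha : a ≠ x) (hb : b ≠ x) :
    davoid G a b x = (G.avoid x).edist a b :=
  if_neg (by tauto)

theorem edist_eq_length_of_append {H H' : SimpleGraph V} (hle : H' ≤ H) {u m v : V}
    (P : H.Walk u m) (hP : ∀ e ∈ P.edges, e ∈ H'.edgeSet) (q : H.Walk m v)
    (h : ((P.append q).length : ℕ∞) = H.edist u v) : H'.edist u m = P.length := by
  refine le_antisymm (by simpa using edist_le (P.transfer H' hP)) ?_
  have : (P.length : ℕ∞) + q.length ≤ H'.edist u m + q.length :=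
    calc (P.length : ℕ∞) + q.length = H.edist u v := by
          rw [← h, Walk.length_append, Nat.cast_add]
      _ ≤ H.edist u m + H.edist m v := H.edist_triangle
      _ ≤ H'.edist u m + q.length := add_le_add (edist_anti hle) (edist_le q)
  exact (WithTop.add_le_add_iff_right (ENat.natCast_ne_top _)).1 this

namespace Walk

theorem notMem_support_of_avoid {G : SimpleGraph V} {x u v : V} (p : (G.avoid x).Walk u v)
    (hu : u ≠ x) : x ∉ p.support := by
  induction p with
  | nil => simpa [eq_comm] using hu
  | cons h _ ih => simpa [hu.symm] using ih h.2.2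

theorem edges_subset_edgeSet_avoidSet {H G : SimpleGraph V} (hle : H ≤ G) {S : Set V} {u v : V}
    (p : H.Walk u v) (hp : ∀ z ∈ p.support, z ∉ S) :
    ∀ e ∈ p.edges, e ∈ (G.avoidSet S).edgeSet := by
  induction p with
  | nil => simp
  | cons h q ih =>
    rw [support_cons, List.forall_mem_cons] at hp
    rw [edges_cons, List.forall_mem_cons]
    exact ⟨(SimpleGraph.mem_edgeSet _).2 ⟨hle h, hp.1, hp.2 _ q.start_mem_support⟩, ih hp.2⟩

variable {G : SimpleGraph V}

theorem exists_eq_append_cons_of_notMem_of_mem (S : Set V) {u v : V} (p : G.Walk u v)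
    (hu : u ∉ S) (hv : v ∈ S) :
    ∃ (b c : V) (P : G.Walk u b) (hbc : G.Adj b c) (Q : G.Walk c v),
      p = P.append (cons hbc Q) ∧ c ∈ S ∧ ∀ z ∈ P.support, z ∉ S := by
  induction p with
  | nil => exact absurd hv hu
  | @cons a c _ hac q ih =>
    by_cases hc : c ∈ S
    · exact ⟨a, c, nil, hac, q, rfl, hc, by simpa using hu⟩
    · obtain ⟨b, c', P, hbc, Q, rfl, hc', hP⟩ := ih hc hv
      exact ⟨b, c', cons hac P, hbc, Q, rfl, hc', by simpa [hu] using hP⟩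

theorem support_append_cons {u b c v : V} (P : G.Walk u b) (h : G.Adj b c) (S : G.Walk c v) :
    (P.append (cons h S)).support = P.support ++ S.support := by
  simp [support_append]

theorem isPath_append_cons {u b c v : V} {P : G.Walk u b} {h : G.Adj b c} {S : G.Walk c v}
    (hP : P.IsPath) (hS : S.IsPath) (hdisj : ∀ z ∈ P.support, z ∉ S.support) :
    (P.append (cons h S)).IsPath := by
  rw [isPath_def, support_append_cons]
  exact hP.support_nodup.append hS.support_nodup hdisj

theorem length_append_cons_eq_edist {u b c v : V} {P : G.Walk u b} {h : G.Adj b c}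
    {Q S : G.Walk c v} (hQ : ((P.append (cons h Q)).length : ℕ∞) = G.edist u v)
    (hSQ : S.length ≤ Q.length) : ((P.append (cons h S)).length : ℕ∞) = G.edist u v := by
  refine le_antisymm (hQ ▸ ?_) (edist_le _)
  simp only [length_append, length_cons]
  exact_mod_cast (by omega)

variable [DecidableEq V]

theorem IsPath.takeUntil_end {u v : V} {p : G.Walk u v} (hp : p.IsPath) :
    p.takeUntil v p.end_mem_support = p := by
  have hnil : p.dropUntil v p.end_mem_support = .nil :=
    eq_nil_iff_nil.mpr (isPath_iff_nil.mp (hp.dropUntil _))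
  simpa [hnil] using p.take_spec p.end_mem_support

theorem IsPath.takeUntil_append_end {u b v : V} {P : G.Walk u b} (hP : P.IsPath)
    (q : G.Walk b v) (hb : b ∈ (P.append q).support) : (P.append q).takeUntil b hb = P := by
  rw [takeUntil_append_of_mem_left _ _ P.end_mem_support, hP.takeUntil_end]

theorem IsPath.end_notMem_support_takeUntil {u v w : V} {p : G.Walk u v} (hp : p.IsPath)
    (h : w ∈ p.support) (hw : w ≠ v) : v ∉ (p.takeUntil w h).support := by
  intro hv
  have hlt := length_takeUntil_lt_length h hw
  have hle := (p.takeUntil w h).length_takeUntil_le_length hv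
  rw [takeUntil_takeUntil, hp.takeUntil_end] at hle
  omega

theorem idxOf_support_append_cons_lt_iff {u b c v : V} {P : G.Walk u b} (h : G.Adj b c)
    {S : G.Walk c v} (hc : c ∉ P.support) {z : V} :
    (P.append (cons h S)).support.idxOf z < (P.append (cons h S)).support.idxOf c ↔
      z ∈ P.support := by
  rw [support_append_cons, List.idxOf_append_of_notMem hc, ← S.cons_tail_support,
    List.idxOf_cons_self, add_zero]
  refine ⟨fun hlt => ?_, fun hz => ?_⟩
  · by_contra hz
    rw [List.idxOf_append_of_notMem hz] at hlt
    omega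
  · rw [List.idxOf_append_of_mem hz]
    exact List.idxOf_lt_length_of_mem hz

theorem idxOf_support_append_cons_add_one {u b c v : V} {P : G.Walk u b} (hP : P.IsPath)
    (h : G.Adj b c) (S : G.Walk c v) (hc : c ∉ P.support) :
    (P.append (cons h S)).support.idxOf b + 1 = (P.append (cons h S)).support.idxOf c := by
  rw [← length_takeUntil _ (support_subset_support_append_left _ _ P.end_mem_support),
    hP.takeUntil_append_end, support_append_cons, List.idxOf_append_of_notMem hc,
    ← S.cons_tail_support, List.idxOf_cons_self, length_support]

end Walk

theorem IsAcyclic.eq_of_isPath {T : SimpleGraph V} (hT : T.IsAcyclic) {u v : V}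
    {p q : T.Walk u v} (hp : p.IsPath) (hq : q.IsPath) : p = q :=
  congrArg Subtype.val ((hT.subsingleton_path u v).elim ⟨p, hp⟩ ⟨q, hq⟩)

theorem IsTree.length_eq_edist {T : SimpleGraph V} (hT : T.IsTree) {u v : V} {p : T.Walk u v}
    (hp : p.IsPath) : (p.length : ℕ∞) = T.edist u v := by
  obtain ⟨q, hq, hqlen⟩ := (hT.connected u v).exists_path_of_dist
  obtain rfl := hT.isAcyclic.eq_of_isPath hp hq
  rw [hqlen, (hT.connected u v).coe_dist_eq_edist]

theorem IsTree.length_dropUntil_le_edist [DecidableEq V] {G T : SimpleGraph V} (hT : T.IsTree)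
    {r : V} (hSPT : ∀ z, T.edist r z = G.edist r z) {c w : V} {p : T.Walk r c} (hp : p.IsPath)
    (h : w ∈ p.support) : ((p.dropUntil w h).length : ℕ∞) ≤ G.edist w c := by
  have htake := hT.length_eq_edist (hp.takeUntil h)
  have hfull := hT.length_eq_edist hp
  rw [hSPT] at htake hfull
  have : ((p.takeUntil w h).length : ℕ∞) + (p.dropUntil w h).length ≤
      (p.takeUntil w h).length + G.edist w c := by
    rw [← Nat.cast_add, ← Walk.length_append, Walk.take_spec, hfull, htake]
    exact G.edist_triangle
  exact (ENat.add_le_add_iff_left (ENat.natCast_ne_top _)).1 this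

/-- The set `D` of the paper: the subtree of `T`, rooted at `r`, hanging at `w`. -/
def descendants (T : SimpleGraph V) (r w : V) : Set V :=
  {z | ∀ p : T.Walk r z, p.IsPath → w ∈ p.support}

section descendants

variable {T : SimpleGraph V} {r w : V}

theorem mem_descendants_self : w ∈ T.descendants r w := fun p _ => p.end_mem_support

theorem root_notMem_descendants (h : w ≠ r) : r ∉ T.descendants r w :=
  fun hr => h (by simpa using hr Walk.nil Walk.IsPath.nil)

theorem IsAcyclic.mem_descendants (hT : T.IsAcyclic) {z : V} {p : T.Walk r z} (hp : p.IsPath)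
    (hw : w ∈ p.support) : z ∈ T.descendants r w := by
  intro q hq
  obtain rfl := hT.eq_of_isPath hq hp
  exact hw

variable [DecidableEq V]

theorem notMem_descendants_of_mem_support {x : V} {p : T.Walk r w} (hp : p.IsPath)
    (hx : x ∈ p.support) (hxw : x ≠ w) : x ∉ T.descendants r w :=
  fun h => hp.end_notMem_support_takeUntil hx hxw (h _ (hp.takeUntil hx))

theorem IsAcyclic.support_dropUntil_subset_descendants (hT : T.IsAcyclic) {c : V}
    {p : T.Walk r c} (hp : p.IsPath) (h : w ∈ p.support) :
    ∀ z ∈ (p.dropUntil w h).support, z ∈ T.descendants r w := by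
  intro z hz
  have hpath : ((p.takeUntil w h).append ((p.dropUntil w h).takeUntil z hz)).IsPath := by
    have hp' := hp
    rw [← p.take_spec h, ← (p.dropUntil w h).take_spec hz, Walk.append_assoc] at hp'
    exact hp'.of_append_left
  exact hT.mem_descendants hpath <|
    (Walk.mem_support_append_iff _ _).2 (Or.inl (Walk.end_mem_support _))

theorem IsTree.exists_isPath_avoid_descendants {G : SimpleGraph V} (hle : T ≤ G)
    (hT : T.IsTree) (hSPT : ∀ z, T.edist r z = G.edist r z) {c x : V}
    (hc : c ∈ T.descendants r w) (hx : x ∉ T.descendants r w) :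
    ∃ S : (G.avoid x).Walk c w, S.IsPath ∧ (∀ z ∈ S.support, z ∈ T.descendants r w) ∧
      (S.length : ℕ∞) ≤ G.edist c w := by
  obtain ⟨p, hp, -⟩ := (hT.connected r c).exists_path_of_dist
  have hw : w ∈ p.support := hc p hp
  have hD : ∀ z ∈ (p.dropUntil w hw).reverse.support, z ∈ T.descendants r w := by
    simpa using hT.isAcyclic.support_dropUntil_subset_descendants hp hw
  have hedges : ∀ e ∈ (p.dropUntil w hw).reverse.edges, e ∈ (G.avoid x).edgeSet :=
    Walk.edges_subset_edgeSet_avoidSet hle _ fun z hz (hzx : z = x) => hx (hzx ▸ hD z hz)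
  refine ⟨_, ((hp.dropUntil hw).reverse).transfer hedges, by simpa using hD, ?_⟩
  rw [Walk.length_transfer, Walk.length_reverse, edist_comm]
  exact hT.length_dropUntil_le_edist hSPT hp hw

end descendants

end SimpleGraph

theorem stmt14_general {V : Type*} [DecidableEq V] (G : SimpleGraph V)
    (r : V) (T : SimpleGraph V) (hle : T ≤ G) (hT : T.IsTree)
    (hSPT : ∀ z : V, T.edist r z = G.edist r z)
    (x w : V) (hxr : x ≠ r) (hadj : T.Adj x w)
    (hchild : ∀ p : T.Walk r w, p.IsPath → x ∈ p.support)
    (hconn : (G.avoid x).Reachable r w) :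
    ∃ R : (G.avoid x).Walk r w, R.IsPath ∧ (R.length : ℕ∞) = davoid G r w x ∧
      ∃ c ∈ R.support,
        (∀ z ∈ R.support,
          (R.support.idxOf z < R.support.idxOf c →
            z ∉ {z' : V | ∀ p : T.Walk r z', p.IsPath → w ∈ p.support} ∧ z ≠ x) ∧
          (R.support.idxOf c ≤ R.support.idxOf z →
            z ∈ {z' : V | ∀ p : T.Walk r z', p.IsPath → w ∈ p.support})) ∧
        ∃ (b : V) (hb : b ∈ R.support),
          R.support.idxOf b + 1 = R.support.idxOf c ∧
          ((R.takeUntil b hb).length : ℕ∞)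
            = (G.avoidSet ({z' : V | ∀ p : T.Walk r z', p.IsPath → w ∈ p.support}
                ∪ {x})).edist r b := by
  have hwr : w ≠ r := by rintro rfl; exact hxr (by simpa using hchild .nil .nil)
  obtain ⟨p, hp, -⟩ := (hT.connected r w).exists_path_of_dist
  have hxD : x ∉ T.descendants r w := notMem_descendants_of_mem_support hp (hchild p hp) hadj.ne
  obtain ⟨R₀, hR₀, hR₀len⟩ := hconn.exists_path_of_dist
  obtain ⟨b, c, P, hbc, Q, rfl, hcD, hPD⟩ := R₀.exists_eq_append_cons_of_notMem_of_mem _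
    (root_notMem_descendants hwr) mem_descendants_self
  obtain ⟨S, hS, hSD, hSlen⟩ := hT.exists_isPath_avoid_descendants hle hSPT hcD hxD
  have hcP : c ∉ P.support := fun hc => hPD c hc hcD
  have hPx : x ∉ P.support := P.notMem_support_of_avoid hxr.symm
  have hSQ : S.length ≤ Q.length := by
    exact_mod_cast hSlen.trans ((edist_anti (G.avoid_le x)).trans (edist_le Q))
  have hR := Walk.length_append_cons_eq_edist
    (hconn.coe_dist_eq_edist ▸ congrArg Nat.cast hR₀len) hSQ
  refine ⟨P.append (.cons hbc S),
    Walk.isPath_append_cons hR₀.of_append_left hS fun z hz hzS => hPD z hz (hSD z hzS),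
    by rw [davoid_of_ne hxr.symm hadj.ne'] ; exact hR, c,
    by simp [Walk.support_append_cons], fun z hz => ⟨fun hlt => ?_, fun hci => ?_⟩, b,
    Walk.support_subset_support_append_left _ _ P.end_mem_support,
    Walk.idxOf_support_append_cons_add_one hR₀.of_append_left hbc S hcP, ?_⟩
  · have hzP := (Walk.idxOf_support_append_cons_lt_iff hbc hcP).1 hlt
    exact ⟨hPD z hzP, fun hzx => hPx (hzx ▸ hzP)⟩
  · rw [Walk.support_append_cons, List.mem_append] at hz
    rcases hz with hzP | hzS
    · exact absurd ((Walk.idxOf_support_append_cons_lt_iff hbc hcP).2 hzP) (not_lt.2 hci)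
    · exact hSD z hzS
  · rw [hR₀.of_append_left.takeUntil_append_end]
    refine (edist_eq_length_of_append
      (avoidSet_le_avoid (Set.mem_union_right _ (Set.mem_singleton x))) P
      (P.edges_subset_edgeSet_avoidSet (G.avoid_le x) ?_) _ hR).symm
    exact fun z hz hzDx => hzDx.elim (hPD z hz) fun hzx => hPx (hzx ▸ hz)

/-- Lemma 3.1 of the paper: let `T` be a shortest-path tree of `G`
rooted at `r`, `x ≠ r`, `w` a child of `x` in `T`, and
`D = {z : the tree path from r to z passes through w}` (the subtree hanging at `w`).
If `r` and `w` are connected in `G − x`, then some shortest `r`–`w` path `R` in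
`G − x` splits at a vertex `c` so that the part before `c` stays outside `D ∪ {x}`
and is a shortest path between its endpoints in the subgraph induced on
`V \ (D ∪ {x})`, while the part from `c` onward stays inside `D`. -/
theorem stmt14 {V : Type*} [Fintype V] [DecidableEq V] (G : SimpleGraph V)
    (hG : G.Connected) (r : V) (T : SimpleGraph V) (hle : T ≤ G) (hT : T.IsTree)
    (hSPT : ∀ z : V, T.edist r z = G.edist r z)
    (x w : V) (hxr : x ≠ r) (hadj : T.Adj x w)
    (hchild : ∀ p : T.Walk r w, p.IsPath → x ∈ p.support)
    (hconn : (G.avoid x).Reachable r w) :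
    ∃ R : (G.avoid x).Walk r w, R.IsPath ∧ (R.length : ℕ∞) = davoid G r w x ∧
      ∃ c ∈ R.support,
        (∀ z ∈ R.support,
          (R.support.idxOf z < R.support.idxOf c →
            z ∉ {z' : V | ∀ p : T.Walk r z', p.IsPath → w ∈ p.support} ∧ z ≠ x) ∧
          (R.support.idxOf c ≤ R.support.idxOf z →
            z ∈ {z' : V | ∀ p : T.Walk r z', p.IsPath → w ∈ p.support})) ∧
        ∃ (b : V) (hb : b ∈ R.support),
          R.support.idxOf b + 1 = R.support.idxOf c ∧
          ((R.takeUntil b hb).length : ℕ∞)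
            = (G.avoidSet ({z' : V | ∀ p : T.Walk r z', p.IsPath → w ∈ p.support}
                ∪ {x})).edist r b :=
  stmt14_general G r T hle hT hSPT x w hxr hadj hchild hconn
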